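/- Let a < b be real numbers and let f : [a,b] → ℝ be twice differentiable, with real constants m and M such that m ≤ f''(x) ≤ M for all x ∈ [a,b]. Then m(b−a)²/48 ≤ (1/2)·( (f(a)+f(b))/2 + f((a+b)/2) ) − (1/(b−a))·∫_a^b f(t) dt ≤ M(b−a)²/48. -/

import Mathlib

open MeasureTheory intervalIntegral Set

/-!
Subtracting `m x² / 2` from `f` leaves a convex function, and Bullen's inequality says that
the gap `bullenGap a b g` between the average of the trapezoid and midpoint rules and the mean
value of `g` is nonnegative for convex `g`. The gap is linear in `g` and equals `(b - a)² / 24`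
for `g x = x²`, which gives the lower bound; the upper bound is the lower bound for `-f`.
Bullen's inequality itself is the trapezoid inequality `∫ g ≤ (b - a) (g a + g b) / 2`
applied on both halves of `[a, b]`.
-/

theorem ConvexOn.add_comp_reflect_le {a b : ℝ} {g : ℝ → ℝ} (hg : ConvexOn ℝ (Icc a b) g)
    {t : ℝ} (ht : t ∈ Icc a b) : g t + g (a + b - t) ≤ g a + g b := by
  obtain ⟨hat, htb⟩ := ht
  rcases hat.eq_or_lt with rfl | hat
  · simp
  have hab : 0 < b - a := by linarith
  have ha : a ∈ Icc a b := left_mem_Icc.2 (by linarith)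
  have hb : b ∈ Icc a b := right_mem_Icc.2 (by linarith)
  have hs : 0 ≤ (b - t) / (b - a) := div_nonneg (by linarith) hab.le
  have hr : 0 ≤ (t - a) / (b - a) := div_nonneg (by linarith) hab.le
  -- `t` and its reflection `a + b - t` are the convex combinations of `a, b` with swapped weights
  have h₁ := hg.2 ha hb hs hr (by field_simp; ring)
  have h₂ := hg.2 ha hb hr hs (by field_simp; ring)
  simp only [smul_eq_mul] at h₁ h₂
  rw [show (b - t) / (b - a) * a + (t - a) / (b - a) * b = t by field_simp; ring] at h₁
  rw [show (t - a) / (b - a) * a + (b - t) / (b - a) * b = a + b - t by field_simp; ring] at h₂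
  have hweights : (b - t) / (b - a) * g a + (t - a) / (b - a) * g b
      + ((t - a) / (b - a) * g a + (b - t) / (b - a) * g b) = g a + g b := by
    field_simp; ring
  linarith

theorem ConvexOn.integral_le_trapezoid {a b : ℝ} (hab : a ≤ b) {g : ℝ → ℝ}
    (hg : ConvexOn ℝ (Icc a b) g) (hc : ContinuousOn g (Icc a b)) :
    ∫ t in a..b, g t ≤ (b - a) * (g a + g b) / 2 := by
  have hi : IntervalIntegrable g volume a b := hc.intervalIntegrable_of_Icc hab
  have hi' : IntervalIntegrable (fun t ↦ g (a + b - t)) volume a b := by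
    simpa using (hi.comp_sub_left (a + b)).symm
  have hreflect : ∫ t in a..b, g (a + b - t) = ∫ t in a..b, g t := by
    simp [intervalIntegral.integral_comp_sub_left]
  have hsum : ∫ t in a..b, (g t + g (a + b - t)) ≤ ∫ _ in a..b, (g a + g b) :=
    integral_mono_on hab (hi.add hi') intervalIntegrable_const
      fun t ht ↦ hg.add_comp_reflect_le ht
  rw [intervalIntegral.integral_add hi hi', hreflect, intervalIntegral.integral_const,
    smul_eq_mul] at hsum
  linarith

noncomputable def bullenGap (a b : ℝ) (g : ℝ → ℝ) : ℝ :=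
  (1 / 2) * ((g a + g b) / 2 + g ((a + b) / 2)) - (1 / (b - a)) * ∫ t in a..b, g t

theorem bullenGap_neg (a b : ℝ) (g : ℝ → ℝ) :
    bullenGap a b (fun x ↦ -g x) = -bullenGap a b g := by
  simp only [bullenGap, intervalIntegral.integral_neg]
  ring

theorem bullenGap_sub_half_mul_sq {a b : ℝ} (hab : a ≠ b) {g : ℝ → ℝ}
    (hg : IntervalIntegrable g volume a b) (k : ℝ) :
    bullenGap a b (fun x ↦ g x - k / 2 * x ^ 2) = bullenGap a b g - k * (b - a) ^ 2 / 48 := by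
  have hba : b - a ≠ 0 := sub_ne_zero.2 hab.symm
  simp only [bullenGap]
  rw [intervalIntegral.integral_sub hg
      ((by fun_prop : Continuous fun x : ℝ ↦ k / 2 * x ^ 2).intervalIntegrable a b),
    intervalIntegral.integral_const_mul, integral_pow]
  field_simp
  ring

theorem ConvexOn.bullenGap_nonneg {a b : ℝ} (hab : a < b) {g : ℝ → ℝ}
    (hg : ConvexOn ℝ (Icc a b) g) (hc : ContinuousOn g (Icc a b)) : 0 ≤ bullenGap a b g := by
  have hac : a ≤ (a + b) / 2 := by linarith
  have hcb : (a + b) / 2 ≤ b := by linarith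
  have hsub₁ : Icc a ((a + b) / 2) ⊆ Icc a b := Icc_subset_Icc le_rfl hcb
  have hsub₂ : Icc ((a + b) / 2) b ⊆ Icc a b := Icc_subset_Icc hac le_rfl
  have h₁ := (hg.subset hsub₁ (convex_Icc _ _)).integral_le_trapezoid hac (hc.mono hsub₁)
  have h₂ := (hg.subset hsub₂ (convex_Icc _ _)).integral_le_trapezoid hcb (hc.mono hsub₂)
  rw [bullenGap, sub_nonneg, one_div_mul_eq_div, div_le_iff₀ (by linarith),
    ← integral_add_adjacent_intervals ((hc.mono hsub₁).intervalIntegrable_of_Icc hac)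
      ((hc.mono hsub₂).intervalIntegrable_of_Icc hcb)]
  linarith

theorem convexOn_sub_half_mul_sq {D : Set ℝ} (hD : Convex ℝ D) {f f' f'' : ℝ → ℝ} {m : ℝ}
    (hf' : ∀ x ∈ D, HasDerivWithinAt f (f' x) D x)
    (hf'' : ∀ x ∈ D, HasDerivWithinAt f' (f'' x) D x) (hm : ∀ x ∈ D, m ≤ f'' x) :
    ConvexOn ℝ D (fun x ↦ f x - m / 2 * x ^ 2) := by
  refine convexOn_of_hasDerivWithinAt2_nonneg hD (f' := fun x ↦ f' x - m * x)
    (f'' := fun x ↦ f'' x - m) ?_ (fun x hx ↦ ?_) (fun x hx ↦ ?_) (fun x hx ↦ ?_)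
  · exact ContinuousOn.sub (fun x hx ↦ (hf' x hx).continuousWithinAt) (by fun_prop)
  · have hsq := ((hasDerivAt_pow 2 x).const_mul (m / 2)).hasDerivWithinAt (s := interior D)
    exact (((hf' x (interior_subset hx)).mono interior_subset).sub hsq).congr_deriv
      (by simp; ring)
  · have hlin := ((hasDerivAt_id x).const_mul m).hasDerivWithinAt (s := interior D)
    exact (((hf'' x (interior_subset hx)).mono interior_subset).sub hlin).congr_deriv (by simp)
  · exact sub_nonneg.2 (hm x (interior_subset hx))

theorem mul_sq_div_48_le_bullenGap {a b : ℝ} (hab : a < b) {f f' f'' : ℝ → ℝ} {m : ℝ}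
    (hf' : ∀ x ∈ Icc a b, HasDerivWithinAt f (f' x) (Icc a b) x)
    (hf'' : ∀ x ∈ Icc a b, HasDerivWithinAt f' (f'' x) (Icc a b) x)
    (hm : ∀ x ∈ Icc a b, m ≤ f'' x) :
    m * (b - a) ^ 2 / 48 ≤ bullenGap a b f := by
  have hfc : ContinuousOn f (Icc a b) := fun x hx ↦ (hf' x hx).continuousWithinAt
  have hgap := (convexOn_sub_half_mul_sq (convex_Icc a b) hf' hf'' hm).bullenGap_nonneg hab
    (hfc.sub (by fun_prop))
  rwa [bullenGap_sub_half_mul_sq hab.ne (hfc.intervalIntegrable_of_Icc hab.le), sub_nonneg]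
    at hgap

/-- Remark: for twice differentiable `f` with `m ≤ f'' ≤ M` on `[a,b]`,
`m(b−a)²/48 ≤ (1/2)·((f(a)+f(b))/2 + f((a+b)/2)) − (1/(b−a))·∫_a^b f ≤ M(b−a)²/48`. -/
theorem fejer_stmt_6 (a b : ℝ) (hab : a < b) (f f' f'' : ℝ → ℝ) (m M : ℝ)
    (hf' : ∀ x ∈ Set.Icc a b, HasDerivWithinAt f (f' x) (Set.Icc a b) x)
    (hf'' : ∀ x ∈ Set.Icc a b, HasDerivWithinAt f' (f'' x) (Set.Icc a b) x)
    (hm : ∀ x ∈ Set.Icc a b, m ≤ f'' x)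
    (hM : ∀ x ∈ Set.Icc a b, f'' x ≤ M) :
    m * (b - a) ^ 2 / 48
        ≤ (1 / 2) * ((f a + f b) / 2 + f ((a + b) / 2))
            - (1 / (b - a)) * (∫ t in a..b, f t) ∧
    (1 / 2) * ((f a + f b) / 2 + f ((a + b) / 2)) - (1 / (b - a)) * (∫ t in a..b, f t)
        ≤ M * (b - a) ^ 2 / 48 := by
  refine ⟨mul_sq_div_48_le_bullenGap hab hf' hf'' hm, ?_⟩
  have hneg := mul_sq_div_48_le_bullenGap hab (f := fun x ↦ -f x) (f' := fun x ↦ -f' x)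
    (fun x hx ↦ (hf' x hx).neg) (fun x hx ↦ (hf'' x hx).neg) (fun x hx ↦ neg_le_neg (hM x hx))
  rw [bullenGap_neg] at hneg
  change bullenGap a b f ≤ _
  linarith
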